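/- Let h=(1, r−1, a, b) and h'=(1, r', c) be differentiable O-sequences such that r'−1 ≤ r−2 and c−r' ≤ a−(r−1). Then the shifted sum (1, r, a+r', b+c) is a differentiable O-sequence. -/

import Mathlib

/-- The degree of a monomial, modeled as a finitely supported exponent vector. -/
def monDeg {r : ℕ} (m : Fin r →₀ ℕ) : ℕ := m.sum fun _ e => e

/-- A (monomial) order ideal: a finite nonempty set of monomials closed under divisibility. -/
def IsOrderIdeal {r : ℕ} (X : Finset (Fin r →₀ ℕ)) : Prop :=
  X.Nonempty ∧ ∀ m ∈ X, ∀ n : Fin r →₀ ℕ, n ≤ m → n ∈ X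

/-- An order ideal is pure if all its maximal monomials (w.r.t. divisibility) have
the same degree. -/
def IsPureSet {r : ℕ} (X : Finset (Fin r →₀ ℕ)) : Prop :=
  ∀ m ∈ X, ∀ n ∈ X, (∀ p ∈ X, m ≤ p → p = m) → (∀ p ∈ X, n ≤ p → p = n) →
    monDeg m = monDeg n

/-- The number of monomials of `X` of degree `i`. -/
def degCount {r : ℕ} (X : Finset (Fin r →₀ ℕ)) (i : ℕ) : ℕ :=
  (X.filter fun m => monDeg m = i).card

/-- `h` is the h-vector `(h_0, …, h_e)` of `X`, where `e` is the top degree of `X`. -/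
def IsHVectorOf {r : ℕ} (X : Finset (Fin r →₀ ℕ)) (h : List ℕ) : Prop :=
  h ≠ [] ∧ (∀ i, degCount X i = h.getD i 0) ∧ degCount X (h.length - 1) ≠ 0

/-- A finite sequence is an O-sequence if it is the h-vector of a monomial order ideal. -/
def IsOSequence (h : List ℕ) : Prop :=
  ∃ (r : ℕ) (X : Finset (Fin r →₀ ℕ)), IsOrderIdeal X ∧ IsHVectorOf X h

/-- A finite sequence is a pure O-sequence if it is the h-vector of a pure monomial
order ideal. -/
def IsPureOSequence (h : List ℕ) : Prop :=
  ∃ (r : ℕ) (X : Finset (Fin r →₀ ℕ)), IsOrderIdeal X ∧ IsPureSet X ∧ IsHVectorOf X h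

/-- The first difference `Δh = (h₀, h₁ - h₀, h₂ - h₁, …)` of a sequence. -/
def diffSeq (h : List ℕ) : List ℕ :=
  h.headD 1 :: List.zipWith (fun x y => x - y) h.tail h

/-- A sequence of nonnegative integers is differentiable if its first difference
has all entries nonnegative (i.e. the sequence is nondecreasing) and is an
O-sequence. -/
def IsDifferentiable (h : List ℕ) : Prop :=
  List.Chain' (· ≤ ·) h ∧ IsOSequence (diffSeq h)

/-!
By Macaulay's theorem, `(1, h₁, h₂, h₃)` with `h₃ ≠ 0` is an O-sequence iff `h₂ ≤ C(h₁+1, 2)`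
and `h₃ ≤ h₂^⟨2⟩`. Necessity: the layers of an order ideal by the exponent of `x₀` form a
decreasing chain of order ideals in one variable fewer, so induction on the number of variables
reduces the bound to the inequality `x^⟨2⟩ + min(x, C(y+1, 2)) + y + 1 ≤ (x+y+1)^⟨2⟩`.
Sufficiency: initial revlex segments are closed under taking divisors.
The theorem is then arithmetic: the bounds for the shifted sum and its difference follow from
those for `h`, `Δh`, `h'`, `Δh'` via `x^⟨2⟩ + min(x, C(y+1, 2)) ≤ (x+y)^⟨2⟩`.
-/

namespace Nat

lemma multichoose_two_succ (k : ℕ) : (k + 1).multichoose 2 = k.multichoose 2 + (k + 1) := by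
  rw [multichoose_succ_succ, multichoose_one_right]

lemma multichoose_two_add (a b : ℕ) :
    (a + b).multichoose 2 = a.multichoose 2 + a * b + b.multichoose 2 := by
  induction b with
  | zero => simp
  | succ b ih => rw [← add_assoc, multichoose_two_succ, ih, multichoose_two_succ]; ring

lemma multichoose_two_sub_one_add {k : ℕ} (hk : k ≠ 0) :
    (k - 1).multichoose 2 + k = k.multichoose 2 := by
  obtain ⟨k, rfl⟩ := exists_eq_succ_of_ne_zero hk
  rw [succ_sub_one, multichoose_two_succ]

lemma multichoose_three_succ (k : ℕ) :
    (k + 1).multichoose 3 = k.multichoose 3 + (k + 1).multichoose 2 :=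
  multichoose_succ_succ k 2

lemma multichoose_two_le_multichoose_two {a b : ℕ} (h : a ≤ b) :
    a.multichoose 2 ≤ b.multichoose 2 := by
  obtain ⟨c, rfl⟩ := exists_add_of_le h
  rw [multichoose_two_add]
  omega

lemma le_multichoose_two (k : ℕ) : k ≤ k.multichoose 2 := by
  induction k with
  | zero => simp
  | succ k ih => rw [multichoose_two_succ]; omega

lemma exists_eq_multichoose_two_add (q : ℕ) : ∃ k j, j ≤ k ∧ q = k.multichoose 2 + j := by
  induction q with
  | zero => exact ⟨0, 0, le_rfl, by simp⟩
  | succ q ih =>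
    obtain ⟨k, j, hjk, rfl⟩ := ih
    rcases hjk.lt_or_eq with hjk | rfl
    · exact ⟨k, j + 1, hjk, rfl⟩
    · exact ⟨j + 1, 0, zero_le _, by rw [multichoose_two_succ]; rfl⟩

lemma exists_eq_multichoose_two_add_of_ne_zero {q : ℕ} (hq : q ≠ 0) :
    ∃ k j, 0 < j ∧ j ≤ k + 1 ∧ q = k.multichoose 2 + j := by
  obtain ⟨k, j, hjk, rfl⟩ := exists_eq_multichoose_two_add q
  rcases j.eq_zero_or_pos with rfl | hj
  · obtain ⟨k, rfl⟩ := exists_eq_succ_of_ne_zero (n := k) (by rintro rfl; simp at hq)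
    exact ⟨k, k + 1, k.succ_pos, le_rfl, by rw [multichoose_two_succ]; rfl⟩
  · exact ⟨k, j, hj, le_succ_of_le hjk, rfl⟩

end Nat

open Nat

/-- Macaulay's upper bound `q^⟨2⟩` on the growth of an h-vector from degree 2 to degree 3:
writing `q = C(k+1, 2) + C(j, 1)` with `j ≤ k`, it is `C(k+2, 3) + C(j+1, 2)`. -/
def macaulayBound (q : ℕ) : ℕ :=
  let k := Nat.findGreatest (fun k => k.multichoose 2 ≤ q) q
  k.multichoose 3 + (q - k.multichoose 2).multichoose 2

lemma macaulayBound_multichoose_two_add_of_le {k j : ℕ} (hj : j ≤ k) :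
    macaulayBound (k.multichoose 2 + j) = k.multichoose 3 + j.multichoose 2 := by
  have hk : Nat.findGreatest (fun k' => k'.multichoose 2 ≤ k.multichoose 2 + j)
      (k.multichoose 2 + j) = k := by
    refine findGreatest_eq_iff.2 ⟨(le_multichoose_two k).trans (le_add_right _ _),
      fun _ => le_add_right _ _, fun n hkn _ hn => ?_⟩
    have := multichoose_two_le_multichoose_two (succ_le_of_lt hkn)
    rw [multichoose_two_succ] at this
    omega
  simp only [macaulayBound, hk, add_tsub_cancel_left]

lemma macaulayBound_zero : macaulayBound 0 = 0 := by
  simpa using macaulayBound_multichoose_two_add_of_le (le_refl 0)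

/-- The representation may also end a block: `C(k+1, 2) + C(k+1, 1) = C(k+2, 2) + 0`. -/
lemma macaulayBound_multichoose_two_add {k j : ℕ} (hj : j ≤ k + 1) :
    macaulayBound (k.multichoose 2 + j) = k.multichoose 3 + j.multichoose 2 := by
  rcases hj.lt_or_eq with hj | rfl
  · exact macaulayBound_multichoose_two_add_of_le (le_of_lt_succ hj)
  · have h := macaulayBound_multichoose_two_add_of_le (k := k + 1) (j := 0) (zero_le _)
    rwa [multichoose_two_succ, add_zero, multichoose_zero_succ, add_zero,
      multichoose_three_succ] at h

lemma macaulayBound_succ (q : ℕ) : macaulayBound q + 1 ≤ macaulayBound (q + 1) := by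
  obtain ⟨k, j, hjk, rfl⟩ := exists_eq_multichoose_two_add q
  rw [macaulayBound_multichoose_two_add (le_succ_of_le hjk), add_assoc (k.multichoose 2),
    macaulayBound_multichoose_two_add (succ_le_succ hjk), multichoose_two_succ]
  omega

lemma macaulayBound_add_le (q i : ℕ) : macaulayBound q + i ≤ macaulayBound (q + i) := by
  induction i with
  | zero => rfl
  | succ i ih => rw [← add_assoc q]; have := macaulayBound_succ (q + i); omega

/-- Write `x = C(k+1, 2) + j`. If `C(y+1, 2) ≤ x`, then `y ≤ k` and the bound is convexity of
`C(·, 2)`; otherwise `x + y + 1` passes the next block start `C(k+2, 2)`, beyond which `·^⟨2⟩`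
grows by at least one per step. -/
lemma macaulayBound_add_succ_ge (x y : ℕ) :
    macaulayBound x + min x (y.multichoose 2) + y + 1 ≤ macaulayBound (x + y + 1) := by
  obtain ⟨k, j, hjk, rfl⟩ := exists_eq_multichoose_two_add x
  have hx := macaulayBound_multichoose_two_add (le_succ_of_le hjk)
  have hy := multichoose_two_succ y
  have hk := multichoose_two_succ k
  rcases le_or_gt (y.multichoose 2) (k.multichoose 2 + j) with hyx | hxy
  · have hyk : y ≤ k := by
      by_contra! hky
      have := multichoose_two_le_multichoose_two (by omega : k + 1 ≤ y)
      omega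
    rcases le_or_gt (j + (y + 1)) (k + 1) with hjy | hjy
    · rw [show k.multichoose 2 + j + y + 1 = k.multichoose 2 + (j + (y + 1)) by ring,
        macaulayBound_multichoose_two_add hjy, hx,
        multichoose_two_add j (y + 1)]
      omega
    · obtain ⟨u, hu⟩ : ∃ u, j + (y + 1) = (k + 1) + u := ⟨j + (y + 1) - (k + 1), by omega⟩
      obtain ⟨d, hd⟩ : ∃ d, k + 1 = j + d := ⟨k + 1 - j, by omega⟩
      have hsum : k.multichoose 2 + j + y + 1 = (k + 1).multichoose 2 + u := by omega
      have hTk : (k + 1).multichoose 2 = j.multichoose 2 + j * d + d.multichoose 2 := by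
        rw [hd, multichoose_two_add]
      have hTy : (y + 1).multichoose 2 = u.multichoose 2 + u * d + d.multichoose 2 := by
        rw [show y + 1 = u + d by omega, multichoose_two_add]
      have hconvex : u * d ≤ j * d := Nat.mul_le_mul_right d (by omega)
      rw [hx, hsum, macaulayBound_multichoose_two_add (by omega), multichoose_three_succ]
      omega
  · have hky : k + 1 ≤ y := by
      by_contra! hyk
      have := multichoose_two_le_multichoose_two (le_of_lt_succ hyk)
      omega
    have hstep := macaulayBound_add_le ((k + 1).multichoose 2 + (j + 1)) (y - k - 1)
    rw [macaulayBound_multichoose_two_add (by omega : j + 1 ≤ k + 1 + 1)] at hstep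
    rw [show k.multichoose 2 + j + y + 1 =
      (k + 1).multichoose 2 + (j + 1) + (y - k - 1) by omega, hx]
    have := multichoose_three_succ k
    have := multichoose_two_succ j
    omega

lemma macaulayBound_add_ge (x y : ℕ) :
    macaulayBound x + min x (y.multichoose 2) ≤ macaulayBound (x + y) := by
  cases y with
  | zero => simp
  | succ y =>
    have := macaulayBound_add_succ_ge x y
    have := multichoose_two_succ y
    rw [← add_assoc]
    omega

open Finset Finsupp

section Necessity

variable {n : ℕ}

lemma monDeg_eq_degree (m : Fin n →₀ ℕ) : monDeg m = m.degree := rfl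

lemma monDeg_cons (k : ℕ) (p : Fin n →₀ ℕ) : monDeg (cons k p) = k + monDeg p := by
  simp [monDeg_eq_degree, degree_eq_sum, Fin.sum_univ_succ, cons_zero, cons_succ]

lemma IsOrderIdeal.isLowerSet {X : Finset (Fin n →₀ ℕ)} (hX : IsOrderIdeal X) :
    IsLowerSet (X : Set (Fin n →₀ ℕ)) :=
  fun _ _ hle hm => hX.2 _ hm _ hle

lemma degCount_mono {X Y : Finset (Fin n →₀ ℕ)} (h : X ⊆ Y) (d : ℕ) :
    degCount X d ≤ degCount Y d :=
  card_le_card (filter_subset_filter _ h)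

lemma degCount_zero_le_one (X : Finset (Fin n →₀ ℕ)) : degCount X 0 ≤ 1 :=
  card_le_one.2 fun a ha b hb => by
    simp only [mem_filter, monDeg_eq_degree, degree_eq_zero_iff] at ha hb
    rw [ha.2, hb.2]

lemma degCount_ne_zero_of_succ {X : Finset (Fin n →₀ ℕ)}
    (hX : IsLowerSet (X : Set (Fin n →₀ ℕ))) {d : ℕ} (h : degCount X (d + 1) ≠ 0) :
    degCount X d ≠ 0 := by
  obtain ⟨m, hm⟩ := card_ne_zero.1 h
  rw [mem_filter] at hm
  obtain ⟨p, hpm, hp⟩ := exists_le_degree_eq m d (by rw [← monDeg_eq_degree, hm.2]; omega)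
  exact card_ne_zero.2 ⟨p, mem_filter.2 ⟨hX hpm hm.1, hp⟩⟩

lemma degCount_succ_of_fin_zero (X : Finset (Fin 0 →₀ ℕ)) (d : ℕ) : degCount X (d + 1) = 0 :=
  card_eq_zero.2 <| filter_eq_empty_iff.2 fun m _ => by
    simp [Subsingleton.elim m 0, monDeg_eq_degree]

noncomputable def layer (X : Finset (Fin (n + 1) →₀ ℕ)) (k : ℕ) : Finset (Fin n →₀ ℕ) :=
  X.preimage (cons k) (Set.injOn_of_injective (Finsupp.cons_right_injective k))

lemma mem_layer {X : Finset (Fin (n + 1) →₀ ℕ)} {k : ℕ} {p : Fin n →₀ ℕ} :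
    p ∈ layer X k ↔ cons k p ∈ X :=
  mem_preimage

lemma cons_le_cons {k l : ℕ} {p q : Fin n →₀ ℕ} (hkl : k ≤ l) (hpq : p ≤ q) :
    cons k p ≤ cons l q := by
  intro i
  cases i using Fin.cases with
  | zero => simpa [cons_zero] using hkl
  | succ i => simpa [cons_succ] using hpq i

lemma IsLowerSet.layer {X : Finset (Fin (n + 1) →₀ ℕ)}
    (hX : IsLowerSet (X : Set (Fin (n + 1) →₀ ℕ))) (k : ℕ) :
    IsLowerSet (layer X k : Set (Fin n →₀ ℕ)) :=
  fun _ _ hle hp => mem_layer.2 (hX (cons_le_cons le_rfl hle) (mem_layer.1 hp))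

lemma layer_succ_subset {X : Finset (Fin (n + 1) →₀ ℕ)}
    (hX : IsLowerSet (X : Set (Fin (n + 1) →₀ ℕ)))
    (k : ℕ) : layer X (k + 1) ⊆ layer X k :=
  fun _ hp => mem_layer.2 (hX (cons_le_cons k.le_succ le_rfl) (mem_layer.1 hp))

lemma degCount_eq_sum_layer (X : Finset (Fin (n + 1) →₀ ℕ)) (d : ℕ) :
    degCount X d = ∑ k ∈ range (d + 1), degCount (layer X k) (d - k) := by
  rw [degCount, card_eq_sum_card_fiberwise (f := fun m => m 0) (t := range (d + 1))]
  · refine sum_congr rfl fun k hk => ?_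
    rw [mem_range] at hk
    refine card_nbij' tail (cons k) (fun m hm => ?_) (fun p hp => ?_) (fun m hm => ?_)
      (fun p _ => tail_cons k p)
    · simp only [mem_coe, mem_filter] at hm
      have hdeg := monDeg_cons (m 0) (tail m)
      rw [cons_tail, hm.1.2] at hdeg
      simp only [mem_coe, mem_filter, mem_layer, ← hm.2, cons_tail]
      exact ⟨hm.1.1, by omega⟩
    · simp only [mem_coe, mem_filter, mem_layer] at hp ⊢
      rw [monDeg_cons, hp.2, cons_zero]
      exact ⟨⟨hp.1, by omega⟩, rfl⟩
    · simp only [mem_coe, mem_filter] at hm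
      rw [← hm.2, cons_tail]
  · intro m hm
    simp only [mem_coe, mem_filter, coe_range, Set.mem_Iio] at hm ⊢
    have := monDeg_cons (m 0) (tail m)
    rw [cons_tail] at this
    omega

theorem degCount_two_le {X : Finset (Fin n →₀ ℕ)} (hX : IsLowerSet (X : Set (Fin n →₀ ℕ))) :
    degCount X 2 ≤ (degCount X 1).multichoose 2 := by
  induction n with
  | zero => simp [degCount_succ_of_fin_zero]
  | succ n ih =>
    have h1 : degCount X 1 = degCount (layer X 0) 1 + degCount (layer X 1) 0 := by
      simpa [sum_range_succ] using degCount_eq_sum_layer X 1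
    have h2 : degCount X 2 =
        degCount (layer X 0) 2 + degCount (layer X 1) 1 + degCount (layer X 2) 0 := by
      simpa [sum_range_succ] using degCount_eq_sum_layer X 2
    have hl0 := ih (hX.layer 0)
    have hl1 : degCount (layer X 1) 1 ≤ degCount (layer X 0) 1 :=
      degCount_mono (layer_succ_subset hX 0) 1
    have hl2 : degCount (layer X 2) 0 ≤ degCount (layer X 1) 0 :=
      degCount_mono (layer_succ_subset hX 1) 0
    have hl1' : degCount (layer X 1) 1 ≠ 0 → degCount (layer X 1) 0 ≠ 0 :=
      degCount_ne_zero_of_succ (hX.layer 1)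
    have := multichoose_two_succ (degCount (layer X 0) 1)
    rw [h1, h2]
    rcases Nat.le_one_iff_eq_zero_or_eq_one.1 (degCount_zero_le_one (layer X 1)) with h | h
    · rw [h] at hl2 hl1' ⊢
      rw [add_zero]
      omega
    · rw [h]
      omega

theorem degCount_three_le {X : Finset (Fin n →₀ ℕ)} (hX : IsLowerSet (X : Set (Fin n →₀ ℕ))) :
    degCount X 3 ≤ macaulayBound (degCount X 2) := by
  induction n with
  | zero => simp [degCount_succ_of_fin_zero]
  | succ n ih =>
    have h2 : degCount X 2 =
        degCount (layer X 0) 2 + degCount (layer X 1) 1 + degCount (layer X 2) 0 := by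
      simpa [sum_range_succ] using degCount_eq_sum_layer X 2
    have h3 : degCount X 3 = degCount (layer X 0) 3 + degCount (layer X 1) 2 +
        degCount (layer X 2) 1 + degCount (layer X 3) 0 := by
      simpa [sum_range_succ] using degCount_eq_sum_layer X 3
    have hl0 := ih (hX.layer 0)
    have hl1 : degCount (layer X 1) 2 ≤ degCount (layer X 0) 2 :=
      degCount_mono (layer_succ_subset hX 0) 2
    have hl1' := degCount_two_le (hX.layer 1)
    have hl2 : degCount (layer X 2) 1 ≤ degCount (layer X 1) 1 :=
      degCount_mono (layer_succ_subset hX 1) 1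
    have hl3 : degCount (layer X 3) 0 ≤ degCount (layer X 2) 0 :=
      degCount_mono (layer_succ_subset hX 2) 0
    have hl2' : degCount (layer X 2) 1 ≠ 0 → degCount (layer X 2) 0 ≠ 0 :=
      degCount_ne_zero_of_succ (hX.layer 2)
    rw [h2, h3]
    rcases Nat.le_one_iff_eq_zero_or_eq_one.1 (degCount_zero_le_one (layer X 2)) with h | h
    · have := macaulayBound_add_ge (degCount (layer X 0) 2) (degCount (layer X 1) 1)
      rw [h] at hl3 hl2' ⊢
      rw [add_zero]
      omega
    · have := macaulayBound_add_succ_ge (degCount (layer X 0) 2) (degCount (layer X 1) 1)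
      rw [h]
      omega

end Necessity

section Construction

variable {n : ℕ}

lemma mem_finsuppAntidiag_iff {S : Finset (Fin n)} {d : ℕ} {m : Fin n →₀ ℕ} :
    m ∈ S.finsuppAntidiag d ↔ monDeg m = d ∧ m.support ⊆ S :=
  mem_finsuppAntidiag'

lemma single_one_le_of_mem_support {m : Fin n →₀ ℕ} {i : Fin n} (hi : i ∈ m.support) :
    single i 1 ≤ m :=
  single_le_iff.2 (Nat.one_le_iff_ne_zero.2 (mem_support_iff.1 hi))

lemma tsub_single_mem_finsuppAntidiag {S : Finset (Fin n)} {d : ℕ} {m : Fin n →₀ ℕ}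
    (hm : m ∈ S.finsuppAntidiag (d + 1)) {i : Fin n} (hi : i ∈ m.support) :
    m - single i 1 ∈ S.finsuppAntidiag d := by
  rw [mem_finsuppAntidiag_iff] at hm ⊢
  have hdeg := congrArg degree (tsub_add_cancel_of_le (single_one_le_of_mem_support hi))
  rw [map_add, degree_single, ← monDeg_eq_degree, ← monDeg_eq_degree, hm.1] at hdeg
  exact ⟨by omega, (support_mono tsub_le_self).trans hm.2⟩

/-- With `A = {x₀, …, x_{k-1}}`, `v = x_k` and `B = {x₀, …, x_{j-1}}`, this is the initial
segment of length `C(k+d, d+1) + C(j+d-1, d)` of the degree-`(d+1)` monomials in revlex order. -/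
noncomputable def revlexSegment (A B : Finset (Fin n)) (v : Fin n) (d : ℕ) :
    Finset (Fin n →₀ ℕ) :=
  A.finsuppAntidiag (d + 1) ∪ (B.finsuppAntidiag d).map (addLeftEmbedding (single v 1))

lemma card_revlexSegment {A B : Finset (Fin n)} {v : Fin n} (hv : v ∉ A) (d : ℕ) :
    #(revlexSegment A B v d) = (#A).multichoose (d + 1) + (#B).multichoose d := by
  rw [revlexSegment, card_union_of_disjoint, card_map, card_finsuppAntidiag_nat_eq_multichoose,
    card_finsuppAntidiag_nat_eq_multichoose]
  refine disjoint_left.2 fun m hm hm' => ?_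
  obtain ⟨m', -, rfl⟩ := mem_map.1 hm'
  have hvm : v ∈ (single v 1 + m').support := by simp
  exact hv ((mem_finsuppAntidiag_iff.1 hm).2 hvm)

lemma revlexSegment_subset_finsuppAntidiag_univ (A B : Finset (Fin n)) (v : Fin n) (d : ℕ) :
    revlexSegment A B v d ⊆ univ.finsuppAntidiag (d + 1) := by
  intro m hm
  rcases mem_union.1 hm with hm | hm
  · exact mem_finsuppAntidiag_iff.2 ⟨(mem_finsuppAntidiag_iff.1 hm).1, subset_univ _⟩
  · obtain ⟨m', hm', rfl⟩ := mem_map.1 hm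
    refine mem_finsuppAntidiag_iff.2 ⟨?_, subset_univ _⟩
    rw [addLeftEmbedding_apply, monDeg_eq_degree, map_add, degree_single, ← monDeg_eq_degree,
      (mem_finsuppAntidiag_iff.1 hm').1, add_comm]

lemma finsuppAntidiag_subset_revlexSegment {A B : Finset (Fin n)} {v : Fin n}
    (hB : B ⊆ insert v A) (d : ℕ) : B.finsuppAntidiag (d + 1) ⊆ revlexSegment A B v d := by
  intro m hm
  by_cases hv : v ∈ m.support
  · refine mem_union_right _
      (mem_map.2 ⟨m - single v 1, tsub_single_mem_finsuppAntidiag hm hv, ?_⟩)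
    exact add_tsub_cancel_of_le (single_one_le_of_mem_support hv)
  · refine mem_union_left _ (mem_finsuppAntidiag_iff.2 ⟨(mem_finsuppAntidiag_iff.1 hm).1, ?_⟩)
    intro i hi
    rcases mem_insert.1 (hB ((mem_finsuppAntidiag_iff.1 hm).2 hi)) with rfl | hiA
    · exact absurd hi hv
    · exact hiA

lemma tsub_single_mem_revlexSegment {A B : Finset (Fin n)} {v : Fin n} (hB : B ⊆ insert v A)
    {d : ℕ} {m : Fin n →₀ ℕ} (hm : m ∈ revlexSegment A B v (d + 1)) {i : Fin n}
    (hi : i ∈ m.support) :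
    m - single i 1 ∈ revlexSegment A B v d := by
  rcases mem_union.1 hm with hm | hm
  · exact mem_union_left _ (tsub_single_mem_finsuppAntidiag hm hi)
  obtain ⟨m', hm', rfl⟩ := mem_map.1 hm
  rw [addLeftEmbedding_apply] at hi ⊢
  by_cases hiv : i = v
  · subst hiv
    rw [add_tsub_cancel_left]
    exact finsuppAntidiag_subset_revlexSegment hB d hm'
  · have hi' : i ∈ m'.support := by simpa [single_apply, Ne.symm hiv] using hi
    rw [add_tsub_assoc_of_le (single_one_le_of_mem_support hi')]
    exact mem_union_right _ (mem_map_of_mem _ (tsub_single_mem_finsuppAntidiag hm' hi'))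

end Construction

section OSequence

variable {n : ℕ}

lemma mem_of_le_of_shadow {Y : ℕ → Finset (Fin n →₀ ℕ)}
    (hdeg : ∀ d, ∀ m ∈ Y d, monDeg m = d)
    (hshadow : ∀ d, ∀ m ∈ Y (d + 1), ∀ i ∈ m.support, m - single i 1 ∈ Y d)
    {d : ℕ} {m : Fin n →₀ ℕ} (hm : m ∈ Y d) {p : Fin n →₀ ℕ} (hpm : p ≤ m) :
    p ∈ Y (monDeg p) := by
  induction d generalizing m with
  | zero =>
    obtain rfl : m = 0 := (degree_eq_zero_iff m).1 (hdeg 0 m hm)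
    obtain rfl : p = 0 := nonpos_iff_eq_zero.1 hpm
    rwa [hdeg 0 0 hm]
  | succ d ih =>
    by_cases hp : p = m
    · rwa [hp, hdeg _ m hm]
    obtain ⟨i, hi⟩ : ∃ i, p i < m i := by
      by_contra! h
      exact hp (le_antisymm hpm h)
    refine ih (hshadow d m hm i (mem_support_iff.2 (by omega))) fun j => ?_
    rw [tsub_apply, single_apply]
    split_ifs with hij
    · subst hij; omega
    · simpa using hpm j

theorem isOSequence_of_shadow {Y : ℕ → Finset (Fin n →₀ ℕ)} {e : ℕ}
    (hdeg : ∀ d, ∀ m ∈ Y d, monDeg m = d)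
    (hshadow : ∀ d, ∀ m ∈ Y (d + 1), ∀ i ∈ m.support, m - single i 1 ∈ Y d)
    (he : (Y e).Nonempty) :
    IsOSequence ((List.range (e + 1)).map fun d => #(Y d)) := by
  set X := (range (e + 1)).biUnion Y
  have hmemX : ∀ m, m ∈ X ↔ monDeg m ≤ e ∧ m ∈ Y (monDeg m) := fun m => by
    simp only [X, mem_biUnion, mem_range, Nat.lt_succ_iff]
    exact ⟨fun ⟨d, hd, hm⟩ => hdeg d m hm ▸ ⟨hd, hm⟩, fun h => ⟨_, h⟩⟩
  have hcount : ∀ d, degCount X d = if d ≤ e then #(Y d) else 0 := fun d => by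
    have : X.filter (fun m => monDeg m = d) = if d ≤ e then Y d else ∅ := by
      ext m
      split_ifs with hd
      · simp only [mem_filter, hmemX]
        exact ⟨fun ⟨⟨_, hm⟩, hmd⟩ => hmd ▸ hm,
          fun hm => ⟨hdeg d m hm ▸ ⟨hd, hm⟩, hdeg d m hm⟩⟩
      · simp only [mem_filter, hmemX, notMem_empty, iff_false]
        exact fun ⟨⟨hme, _⟩, hmd⟩ => hd (hmd ▸ hme)
    rw [degCount, this]
    split_ifs <;> rfl
  refine ⟨n, X, ⟨he.mono (subset_biUnion_of_mem Y (self_mem_range_succ e)), ?_⟩, ?_, ?_, ?_⟩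
  · intro m hm p hpm
    rw [hmemX] at hm ⊢
    exact ⟨(degree_mono hpm).trans hm.1, mem_of_le_of_shadow hdeg hshadow hm.2 hpm⟩
  · simp
  · intro d
    rw [hcount]
    split_ifs with hd
    · simp [List.getElem?_range (Nat.lt_succ_of_le hd)]
    · simp [List.getElem?_eq_none (by simpa using hd : (List.range (e + 1)).length ≤ d)]
  · simpa [hcount] using he.card_pos.ne'

end OSequence

lemma exists_subset_insert_card_eq {n k j : ℕ} (hk : k < n) (hj : 0 < j) (hjk : j ≤ k + 1) :
    ∃ (A B : Finset (Fin n)) (v : Fin n), v ∉ A ∧ B ⊆ insert v A ∧ #A = k ∧ #B = j := by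
  refine ⟨Iio ⟨k, hk⟩, Iic ⟨j - 1, by omega⟩, ⟨k, hk⟩, by simp, fun i hi => ?_,
    Fin.card_Iio _, by rw [Fin.card_Iic, Nat.sub_add_cancel hj]⟩
  simp only [mem_Iic, mem_insert, mem_Iio, Fin.le_def, Fin.lt_def, Fin.ext_iff] at hi ⊢
  omega

theorem isOSequence_of_le_macaulayBound {d₁ d₂ d₃ : ℕ} (h₃ : d₃ ≠ 0)
    (h₁₂ : d₂ ≤ d₁.multichoose 2) (h₂₃ : d₃ ≤ macaulayBound d₂) :
    IsOSequence [1, d₁, d₂, d₃] := by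
  have hd₂ : d₂ ≠ 0 := by
    rintro rfl
    rw [macaulayBound_zero] at h₂₃
    omega
  obtain ⟨k, j, hj, hjk, rfl⟩ := exists_eq_multichoose_two_add_of_ne_zero hd₂
  have hk : k < d₁ := by
    by_contra! h
    have := multichoose_two_le_multichoose_two h
    omega
  obtain ⟨A, B, v, hv, hB, hA, hBj⟩ := exists_subset_insert_card_eq hk hj hjk
  have hcard : ∀ d, #(revlexSegment A B v d) = k.multichoose (d + 1) + j.multichoose d :=
    fun d => by rw [card_revlexSegment hv, hA, hBj]
  obtain ⟨Z, hZ, hZcard⟩ := exists_subset_card_eq (s := revlexSegment A B v 2) (n := d₃)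
    (by rwa [hcard, ← macaulayBound_multichoose_two_add hjk])
  set Y : ℕ → Finset (Fin d₁ →₀ ℕ) := fun d =>
    [univ.finsuppAntidiag 0, univ.finsuppAntidiag 1, revlexSegment A B v 1, Z].getD d ∅
  have hY : ∀ d, Y d ⊆ univ.finsuppAntidiag d := by
    rintro (_ | _ | _ | _ | d)
    · exact subset_rfl
    · exact subset_rfl
    · exact revlexSegment_subset_finsuppAntidiag_univ A B v 1
    · exact hZ.trans (revlexSegment_subset_finsuppAntidiag_univ A B v 2)
    · simp [Y]
  have hshadow : ∀ d, ∀ m ∈ Y (d + 1), ∀ i ∈ m.support, m - single i 1 ∈ Y d := by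
    rintro (_ | _ | _ | d) m hm i hi
    · exact tsub_single_mem_finsuppAntidiag (hY 1 hm) hi
    · exact tsub_single_mem_finsuppAntidiag (hY 2 hm) hi
    · exact tsub_single_mem_revlexSegment hB (hZ hm) hi
    · simp [Y] at hm
  have hZne : Z.Nonempty := card_pos.1 (hZcard ▸ Nat.pos_of_ne_zero h₃)
  have hO := isOSequence_of_shadow (e := 3)
    (fun d m hm => (mem_finsuppAntidiag_iff.1 (hY d hm)).1) hshadow hZne
  convert hO using 1
  simp [Y, List.range_succ, card_finsuppAntidiag_nat_eq_multichoose, hcard, hZcard]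

theorem IsOSequence.le_multichoose_two {h₀ h₁ h₂ : ℕ} (h : IsOSequence [h₀, h₁, h₂]) :
    h₂ ≤ h₁.multichoose 2 := by
  obtain ⟨n, X, hX, -, hcount, -⟩ := h
  simpa [hcount] using degCount_two_le hX.isLowerSet

theorem isOSequence_four_iff {d₁ d₂ d₃ : ℕ} :
    IsOSequence [1, d₁, d₂, d₃] ↔
      d₃ ≠ 0 ∧ d₂ ≤ d₁.multichoose 2 ∧ d₃ ≤ macaulayBound d₂ := by
  constructor
  · rintro ⟨n, X, hX, -, hcount, hlast⟩
    refine ⟨by simpa [hcount] using hlast, ?_, ?_⟩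
    · simpa [hcount] using degCount_two_le hX.isLowerSet
    · simpa [hcount] using degCount_three_le hX.isLowerSet
  · rintro ⟨h₃, h₁₂, h₂₃⟩
    exact isOSequence_of_le_macaulayBound h₃ h₁₂ h₂₃

/-- If `h = (1, r-1, a, b)` and `h' = (1, r', c)` are differentiable O-sequences with
`r' - 1 ≤ r - 2` and `c - r' ≤ a - (r-1)`, then the shifted sum
`(1, r, a + r', b + c)` is a differentiable O-sequence. -/
theorem shifted_sum_differentiable (r a b r' c : ℕ)
    (hO : IsOSequence [1, r - 1, a, b]) (hD : IsDifferentiable [1, r - 1, a, b])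
    (hO' : IsOSequence [1, r', c]) (hD' : IsDifferentiable [1, r', c])
    (hyp1 : r' - 1 ≤ r - 2) (hyp2 : c - r' ≤ a - (r - 1)) :
    IsOSequence [1, r, a + r', b + c] ∧ IsDifferentiable [1, r, a + r', b + c] := by
  obtain ⟨-, ha, hb⟩ := isOSequence_four_iff.1 hO
  have hmono : List.IsChain (· ≤ ·) [1, r - 1, a, b] := hD.1
  obtain ⟨hr, hra, hab⟩ : 1 ≤ r - 1 ∧ r - 1 ≤ a ∧ a ≤ b := by simpa using hmono
  obtain ⟨hΔb, hΔa, hΔab⟩ : b - a ≠ 0 ∧ a - (r - 1) ≤ (r - 1 - 1).multichoose 2 ∧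
      b - a ≤ macaulayBound (a - (r - 1)) := isOSequence_four_iff.1 hD.2
  have hc := hO'.le_multichoose_two
  have hmono' : List.IsChain (· ≤ ·) [1, r', c] := hD'.1
  obtain ⟨hr', hrc⟩ : 1 ≤ r' ∧ r' ≤ c := by simpa using hmono'
  have hΔc : c - r' ≤ (r' - 1).multichoose 2 := hD'.2.le_multichoose_two
  have hTr := multichoose_two_sub_one_add (k := r) (by omega)
  have hTr' := multichoose_two_sub_one_add (k := r - 1) (by omega)
  have hbc := macaulayBound_add_ge a r'
  have hΔbc := macaulayBound_add_ge (a - (r - 1)) (r' - 1)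
  rw [show a - (r - 1) + (r' - 1) = a + r' - r by omega] at hΔbc
  refine ⟨isOSequence_four_iff.2 ⟨by omega, by omega, by omega⟩, ?_,
    (isOSequence_four_iff (d₁ := r - 1) (d₂ := a + r' - r) (d₃ := b + c - (a + r'))).2
      ⟨by omega, by omega, by omega⟩⟩
  show List.IsChain (· ≤ ·) [1, r, a + r', b + c]
  simp only [List.isChain_cons_cons, List.isChain_singleton, and_true]
  omega
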